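/- Let $U \in \mathbb{R}^{N_1 \times r}$ and $V \in \mathbb{R}^{N_2 \times r}$ have orthonormal columns, let $S \in \mathbb{R}^{r \times r}$, let $A_1 \in \mathbb{R}^{N_1 \times N_1}$, $A_2 \in \mathbb{R}^{N_2 \times N_2}$, $U_0 \in \mathbb{R}^{N_1 \times r_0}$, $S_0 \in \mathbb{R}^{r_0 \times r_0}$, $V_0 \in \mathbb{R}^{N_2 \times r_0}$, and suppose $U U^T U_0 = U_0$ and $V V^T V_0 = V_0$ (i.e., the columns of $U_0$ and $V_0$ lie in the column spaces of $U$ and $V$ respectively). Set $F = U S V^T$, $\tilde{B} = (U^T U_0) S_0 (V^T V_0)^T$, and $R = A_1 F + F A_2^T - U_0 S_0 V_0^T$. Then $R = [\,U,\ A_1 U\,] \begin{pmatrix} -\tilde{B} & S \\ S & 0 \end{pmatrix} [\,V,\ A_2 V\,]^T$, where $[\,U,\ A_1 U\,]$ denotes the horizontal concatenation of $U$ and $A_1 U$. -/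

import Mathlib

/-! Expanding the block product gives `A1 U S Vᵀ + U S (A2 V)ᵀ - U B̃ Vᵀ`, and
`U B̃ Vᵀ = (U Uᵀ U0) S0 (V Vᵀ V0)ᵀ = U0 S0 V0ᵀ` because `U Uᵀ`, `V Vᵀ` fix `U0`, `V0`. -/

open Matrix

namespace Matrix

variable {α m n l k p q : Type*} [CommRing α] [Fintype l] [Fintype k] [Fintype p] [Fintype q]

theorem fromCols_mul_fromBlocks_mul_transpose_fromCols (X : Matrix m l α) (Y : Matrix m k α)
    (P : Matrix l p α) (Q : Matrix l q α) (R : Matrix k p α) (T : Matrix k q α)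
    (Z : Matrix n p α) (W : Matrix n q α) :
    fromCols X Y * fromBlocks P Q R T * (fromCols Z W)ᵀ
      = X * P * Zᵀ + X * Q * Wᵀ + Y * R * Zᵀ + Y * T * Wᵀ := by
  rw [transpose_fromCols, Matrix.mul_assoc, fromBlocks_mul_fromRows, fromCols_mul_fromRows]
  simp only [Matrix.mul_add, Matrix.mul_assoc]
  abel

theorem mul_compression_mul_transpose {r s : Type*} [Fintype m] [Fintype n] [Fintype r]
    [Fintype s] (U : Matrix m r α) (V : Matrix n s α) (U₀ : Matrix m l α) (V₀ : Matrix n k α)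
    (M : Matrix l k α) (hU₀ : U * Uᵀ * U₀ = U₀) (hV₀ : V * Vᵀ * V₀ = V₀) :
    U * (Uᵀ * U₀ * M * (Vᵀ * V₀)ᵀ) * Vᵀ = U₀ * M * V₀ᵀ := by
  have hV₀' : V₀ᵀ * (V * Vᵀ) = V₀ᵀ := by
    simpa only [transpose_mul, transpose_transpose, Matrix.mul_assoc] using
      congrArg transpose hV₀
  calc U * (Uᵀ * U₀ * M * (Vᵀ * V₀)ᵀ) * Vᵀ = U * Uᵀ * U₀ * M * (V₀ᵀ * (V * Vᵀ)) := by
        simp only [transpose_mul, transpose_transpose, Matrix.mul_assoc]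
    _ = U₀ * M * V₀ᵀ := by rw [hU₀, hV₀']

end Matrix

theorem residual_factorization_general (N1 N2 r r0 : ℕ)
    (U : Matrix (Fin N1) (Fin r) ℝ) (V : Matrix (Fin N2) (Fin r) ℝ)
    (S : Matrix (Fin r) (Fin r) ℝ)
    (A1 : Matrix (Fin N1) (Fin N1) ℝ) (A2 : Matrix (Fin N2) (Fin N2) ℝ)
    (U0 : Matrix (Fin N1) (Fin r0) ℝ) (S0 : Matrix (Fin r0) (Fin r0) ℝ)
    (V0 : Matrix (Fin N2) (Fin r0) ℝ)
    (hU0 : U * Uᵀ * U0 = U0) (hV0 : V * Vᵀ * V0 = V0) :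
    A1 * (U * S * Vᵀ) + (U * S * Vᵀ) * A2ᵀ - U0 * S0 * V0ᵀ
      = Matrix.fromCols U (A1 * U)
          * Matrix.fromBlocks (-((Uᵀ * U0) * S0 * (Vᵀ * V0)ᵀ)) S S 0
          * (Matrix.fromCols V (A2 * V))ᵀ := by
  rw [fromCols_mul_fromBlocks_mul_transpose_fromCols, Matrix.mul_neg, Matrix.neg_mul,
    mul_compression_mul_transpose U V U0 V0 S0 hU0 hV0]
  simp only [transpose_mul, Matrix.mul_zero, Matrix.zero_mul, add_zero, Matrix.mul_assoc]
  abel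

/-- Factorized form of the Sylvester residual: if `U, V` have orthonormal columns and the
columns of `U0, V0` lie in the ranges of `U, V` respectively, then with `F = U S Vᵀ` and
`B̃ = (Uᵀ U0) S0 (Vᵀ V0)ᵀ`, the residual `R = A1 F + F A2ᵀ - U0 S0 V0ᵀ` factors as
`[U, A1 U] ⬝ [[-B̃, S], [S, 0]] ⬝ [V, A2 V]ᵀ`. -/
theorem residual_factorization (N1 N2 r r0 : ℕ)
    (U : Matrix (Fin N1) (Fin r) ℝ) (V : Matrix (Fin N2) (Fin r) ℝ)
    (hU : Uᵀ * U = 1) (hV : Vᵀ * V = 1)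
    (S : Matrix (Fin r) (Fin r) ℝ)
    (A1 : Matrix (Fin N1) (Fin N1) ℝ) (A2 : Matrix (Fin N2) (Fin N2) ℝ)
    (U0 : Matrix (Fin N1) (Fin r0) ℝ) (S0 : Matrix (Fin r0) (Fin r0) ℝ)
    (V0 : Matrix (Fin N2) (Fin r0) ℝ)
    (hU0 : U * Uᵀ * U0 = U0) (hV0 : V * Vᵀ * V0 = V0) :
    A1 * (U * S * Vᵀ) + (U * S * Vᵀ) * A2ᵀ - U0 * S0 * V0ᵀ
      = Matrix.fromCols U (A1 * U)
          * Matrix.fromBlocks (-((Uᵀ * U0) * S0 * (Vᵀ * V0)ᵀ)) S S 0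
          * (Matrix.fromCols V (A2 * V))ᵀ :=
  residual_factorization_general N1 N2 r r0 U V S A1 A2 U0 S0 V0 hU0 hV0
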